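/- Let L be a subdirectly irreducible pk-algebra and C(x) = (x ∧ x') ∨ (x ∧ x')*. Then C(a)' ≤ C(a) holds for every a ∈ L if and only if Body(L) is empty. -/

import Mathlib

/-- A pseudocomplemented De Morgan algebra (pm-algebra): a bounded distributive
lattice with a De Morgan involution `dm` and a pseudocomplement `pc`. -/
class PMAlgebra (L : Type*) extends DistribLattice L, BoundedOrder L where
  dm : L → L
  pc : L → L
  dm_dm : ∀ a : L, dm (dm a) = a
  dm_inf : ∀ a b : L, dm (a ⊓ b) = dm a ⊔ dm b
  pc_iff : ∀ a b : L, a ⊓ b = ⊥ ↔ b ≤ pc a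

namespace PMAlgebra

variable {L : Type*} [PMAlgebra L]

/-- A congruence of a pm-algebra. -/
def IsCongruence (θ : L → L → Prop) : Prop :=
  Equivalence θ ∧
  (∀ a b c d : L, θ a b → θ c d → θ (a ⊓ c) (b ⊓ d)) ∧
  (∀ a b c d : L, θ a b → θ c d → θ (a ⊔ c) (b ⊔ d)) ∧
  (∀ a b : L, θ a b → θ (dm a) (dm b)) ∧
  (∀ a b : L, θ a b → θ (pc a) (pc b))

/-- `L` is simple: it has more than one element and its only congruences are
equality and the total relation. -/
def Simple (L : Type*) [PMAlgebra L] : Prop :=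
  Nontrivial L ∧ ∀ θ : L → L → Prop, IsCongruence θ →
    θ = (fun a b => a = b) ∨ θ = (fun _ _ => True)

/-- `L` is subdirectly irreducible: there is a congruence `μ ≠ Eq` contained in
every congruence different from equality. -/
def SubdirectlyIrreducible (L : Type*) [PMAlgebra L] : Prop :=
  ∃ μ : L → L → Prop, IsCongruence μ ∧ μ ≠ (fun a b => a = b) ∧
    ∀ θ : L → L → Prop, IsCongruence θ → θ ≠ (fun a b => a = b) →
      ∀ a b : L, μ a b → θ a b

/-- A prime filter of the underlying lattice of `L`. -/
def IsPrimeFilter (P : Set L) : Prop :=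
  P.Nonempty ∧ P ≠ Set.univ ∧
  (∀ a b : L, a ∈ P → a ≤ b → b ∈ P) ∧
  (∀ a b : L, a ∈ P → b ∈ P → a ⊓ b ∈ P) ∧
  (∀ a b : L, a ⊔ b ∈ P → a ∈ P ∨ b ∈ P)

/-- The Birula–Rasiowa transformation. -/
def phi (P : Set L) : Set L := {a : L | dm a ∉ P}

/-- `P` is a maximal prime filter. -/
def IsMaximalPF (P : Set L) : Prop :=
  IsPrimeFilter P ∧ ∀ Q : Set L, IsPrimeFilter Q → P ⊆ Q → Q = P

/-- `P` is a minimal prime filter. -/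
def IsMinimalPF (P : Set L) : Prop :=
  IsPrimeFilter P ∧ ∀ Q : Set L, IsPrimeFilter Q → Q ⊆ P → Q = P

/-- The body of `L`: prime filters that are neither maximal nor minimal. -/
def body (L : Type*) [PMAlgebra L] : Set (Set L) :=
  {P : Set L | IsPrimeFilter P ∧ ¬ IsMaximalPF P ∧ ¬ IsMinimalPF P}

/-- The prime filter space of `L` is φ-connected. -/
def PhiConnected (L : Type*) [PMAlgebra L] : Prop :=
  ∀ S : Set (Set L), S ⊆ {P : Set L | IsPrimeFilter P} → S.Nonempty →
    (∀ P Q : Set L, P ∈ S → IsPrimeFilter Q → P ⊆ Q → Q ∈ S) →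
    (∀ P Q : Set L, P ∈ S → IsPrimeFilter Q → Q ⊆ P → Q ∈ S) →
    (∀ P : Set L, P ∈ S → phi P ∈ S) →
    S = {P : Set L | IsPrimeFilter P}

/-- The Kleene identity. -/
def Kleene (L : Type*) [PMAlgebra L] : Prop :=
  ∀ a b : L, a ⊓ dm a ≤ b ⊔ dm b

/-- The term `C(x) = (x ∧ x') ∨ (x ∧ x')*`. -/
def C (x : L) : L := (x ⊓ dm x) ⊔ pc (x ⊓ dm x)

/-- The term `T(x) = C(x) ∧ C(x)'`. -/
def T (x : L) : L := C x ⊓ dm (C x)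

end PMAlgebra

/-!
By the Kleene identity every prime filter `P` is comparable with its Birula–Rasiowa image
`φ P = {a | a' ∉ P}`, and `φ` exchanges maximal and minimal prime filters.
If `C(a)' ≤ C(a)` for all `a` and `φ P ⊆ P`, then `C(b) ∉ P` would give `C(b)' ∈ φ P`, hence
`C(b) ∈ φ P ⊆ P`; so every `C(b)` lies in `P`. This forces `P` to be maximal: a prime filter
`Q ⊇ P` either satisfies `Q ⊆ φ Q ⊆ φ P ⊆ P`, or contains some `b` with `b' ∈ Q`; then
`u = b ∧ b' ∈ Q` has `u* ∉ Q`, so `C(b) = u ∨ u* ∈ P` puts `u`, hence `b`, in `P`, and replacing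
`b` by `b ∧ x` shows `x ∈ P` for every `x ∈ Q`. Dually `P ⊆ φ P` forces `P` to be minimal.
Conversely, `x ∉ P` implies `x* ∈ P` for a maximal prime filter `P`, so `C(a)` lies in every
maximal and `C(a)'` in no minimal prime filter; when every prime filter is maximal or minimal,
the prime filter theorem gives `C(a)' ≤ C(a)`.
-/

namespace PMAlgebra

variable {L : Type*} [PMAlgebra L]

theorem dm_le_dm {a b : L} (h : a ≤ b) : dm b ≤ dm a := by
  rw [← inf_eq_left.mpr h, dm_inf]
  exact le_sup_right

theorem dm_sup (a b : L) : dm (a ⊔ b) = dm a ⊓ dm b := by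
  rw [← dm_dm (dm a ⊓ dm b), dm_inf, dm_dm, dm_dm]

theorem inf_pc_self (a : L) : a ⊓ pc a = ⊥ :=
  (pc_iff a (pc a)).mpr le_rfl

namespace IsPrimeFilter

variable {P : Set L} {a b : L}

theorem mem_of_le (hP : IsPrimeFilter P) (ha : a ∈ P) (h : a ≤ b) : b ∈ P :=
  hP.2.2.1 a b ha h

theorem inf_mem (hP : IsPrimeFilter P) (ha : a ∈ P) (hb : b ∈ P) : a ⊓ b ∈ P :=
  hP.2.2.2.1 a b ha hb

theorem sup_mem_iff (hP : IsPrimeFilter P) : a ⊔ b ∈ P ↔ a ∈ P ∨ b ∈ P :=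
  ⟨hP.2.2.2.2 a b, fun h => h.elim (hP.mem_of_le · le_sup_left) (hP.mem_of_le · le_sup_right)⟩

theorem top_mem (hP : IsPrimeFilter P) : ⊤ ∈ P :=
  hP.1.elim fun _ ha => hP.mem_of_le ha le_top

theorem bot_notMem (hP : IsPrimeFilter P) : ⊥ ∉ P := fun h =>
  hP.2.1 (Set.eq_univ_of_forall fun _ => hP.mem_of_le h bot_le)

theorem C_mem_iff (hP : IsPrimeFilter P) (a : L) :
    C a ∈ P ↔ a ⊓ dm a ∈ P ∨ pc (a ⊓ dm a) ∈ P :=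
  hP.sup_mem_iff

end IsPrimeFilter

theorem isPrimeFilter_compl {J : Order.Ideal L} (hJ : J.IsPrime) : IsPrimeFilter (J : Set L)ᶜ :=
  ⟨⟨⊤, Order.Ideal.isProper_iff_top_notMem.mp hJ.toIsProper⟩,
    fun h => (h.symm ▸ Set.mem_univ ⊥ : ⊥ ∈ (J : Set L)ᶜ) J.bot_mem,
    fun _ _ ha hab hb => ha (J.lower hab hb),
    fun _ _ ha hb hab => (hJ.mem_or_mem hab).elim ha hb,
    fun _ _ hab => not_and_or.mp fun h => hab (Order.Ideal.sup_mem h.1 h.2)⟩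

theorem exists_isPrimeFilter_of_disjoint {F : Order.PFilter L} {I : Order.Ideal L}
    (h : Disjoint (F : Set L) I) :
    ∃ P, IsPrimeFilter P ∧ (F : Set L) ⊆ P ∧ Disjoint P (I : Set L) := by
  obtain ⟨J, hJ, hIJ, hFJ⟩ := DistribLattice.prime_ideal_of_disjoint_filter_ideal h
  exact ⟨_, isPrimeFilter_compl hJ, hFJ.subset_compl_right,
    disjoint_compl_left.mono_right (Order.Ideal.coe_subset_coe.mpr hIJ)⟩

theorem le_of_forall_isPrimeFilter {a b : L}
    (h : ∀ P, IsPrimeFilter P → a ∈ P → b ∈ P) : a ≤ b := by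
  by_contra hab
  obtain ⟨P, hP, haP, hbP⟩ := exists_isPrimeFilter_of_disjoint
    (F := Order.PFilter.principal a) (I := Order.Ideal.principal b)
    (Set.disjoint_left.mpr fun x hax hxb => hab (le_trans hax hxb))
  exact Set.disjoint_left.mp hbP (h P hP (haP le_rfl)) le_rfl

theorem IsPrimeFilter.isPFilter_inf {P : Set L} (hP : IsPrimeFilter P) (x : L) :
    Order.IsPFilter {w | ∃ p ∈ P, p ⊓ x ≤ w} := by
  refine .of_def ⟨x, ⊤, hP.top_mem, inf_le_right⟩ ?_
    fun hwv ⟨p, hp, hpw⟩ => ⟨p, hp, hpw.trans hwv⟩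
  rintro w ⟨p, hp, hpw⟩ v ⟨q, hq, hqv⟩
  exact ⟨(p ⊓ q) ⊓ x, ⟨p ⊓ q, hP.inf_mem hp hq, le_rfl⟩,
    le_trans (inf_le_inf_right x inf_le_left) hpw, le_trans (inf_le_inf_right x inf_le_right) hqv⟩

theorem IsMaximalPF.pc_mem {P : Set L} (hP : IsMaximalPF P) {x : L} (hx : x ∉ P) :
    pc x ∈ P := by
  by_contra hpc
  obtain ⟨Q, hQ, hPxQ, -⟩ := exists_isPrimeFilter_of_disjoint
    (F := (hP.1.isPFilter_inf x).toPFilter) (I := Order.Ideal.principal ⊥)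
    (Set.disjoint_left.mpr fun w ⟨p, hp, hpw⟩ hw => hpc <| hP.1.mem_of_le hp <|
      (pc_iff x p).mp (by rw [inf_comm]; exact le_bot_iff.mp (hpw.trans hw)))
  have hQP : Q = P := hP.2 Q hQ fun p hp => hPxQ ⟨p, hp, inf_le_left⟩
  exact hx (hQP ▸ hPxQ ⟨⊤, hP.1.top_mem, inf_le_right⟩)

theorem mem_phi {P : Set L} {a : L} : a ∈ phi P ↔ dm a ∉ P := Iff.rfl

theorem dm_mem_phi {P : Set L} {a : L} : dm a ∈ phi P ↔ a ∉ P := by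
  rw [mem_phi, dm_dm]

theorem phi_phi (P : Set L) : phi (phi P) = P := by
  ext a
  rw [mem_phi, dm_mem_phi, not_not]

theorem phi_subset_phi {P Q : Set L} (h : P ⊆ Q) : phi Q ⊆ phi P :=
  fun _ ha hP => ha (h hP)

theorem IsPrimeFilter.phi {P : Set L} (hP : IsPrimeFilter P) : IsPrimeFilter (phi P) := by
  obtain ⟨a, haP⟩ := (Set.ne_univ_iff_exists_notMem P).mp hP.2.1
  obtain ⟨b, hbP⟩ := hP.1
  refine ⟨⟨dm a, dm_mem_phi.mpr haP⟩, fun h => dm_mem_phi.mp (h ▸ Set.mem_univ (dm b)) hbP,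
    fun a b ha hab hb => ha (hP.mem_of_le hb (dm_le_dm hab)),
    fun a b ha hb hab => (hP.sup_mem_iff.mp (dm_inf a b ▸ hab)).elim ha hb,
    fun a b hab => not_and_or.mp fun h => hab ?_⟩
  rw [dm_sup]
  exact hP.inf_mem h.1 h.2

theorem IsMaximalPF.phi {P : Set L} (hP : IsMaximalPF P) : IsMinimalPF (phi P) :=
  ⟨hP.1.phi, fun Q hQ hQP => by
    rw [← phi_phi Q, hP.2 _ hQ.phi (phi_phi P ▸ phi_subset_phi hQP)]⟩

theorem IsMinimalPF.phi {P : Set L} (hP : IsMinimalPF P) : IsMaximalPF (phi P) :=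
  ⟨hP.1.phi, fun Q hQ hPQ => by
    rw [← phi_phi Q, hP.2 _ hQ.phi (phi_phi P ▸ phi_subset_phi hPQ)]⟩

theorem phi_subset_or_subset_phi (hk : Kleene L) {P : Set L} (hP : IsPrimeFilter P) :
    phi P ⊆ P ∨ P ⊆ phi P := by
  by_contra! h
  obtain ⟨⟨a, haφ, haP⟩, ⟨b, hbP, hbφ⟩⟩ := And.imp Set.not_subset.mp Set.not_subset.mp h
  have hb : b ⊓ dm b ∈ P := hP.inf_mem hbP (not_not.mp hbφ)
  exact (hP.sup_mem_iff.mp (hP.mem_of_le hb (hk b a))).elim haP haφ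

theorem IsMaximalPF.C_mem {P : Set L} (hP : IsMaximalPF P) (a : L) : C a ∈ P :=
  (hP.1.C_mem_iff a).mpr (or_iff_not_imp_left.mpr hP.pc_mem)

theorem IsMinimalPF.dm_C_notMem {P : Set L} (hP : IsMinimalPF P) (a : L) : dm (C a) ∉ P :=
  hP.phi.C_mem a

theorem C_mem_of_phi_subset (hI : ∀ a : L, dm (C a) ≤ C a) {P : Set L}
    (hP : IsPrimeFilter P) (hφ : phi P ⊆ P) (a : L) : C a ∈ P := by
  by_contra h
  exact h (hφ (hP.phi.mem_of_le (dm_mem_phi.mpr h) (hI a)))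

theorem isMaximalPF_of_phi_subset (hI : ∀ a : L, dm (C a) ≤ C a) {P : Set L}
    (hP : IsPrimeFilter P) (hφ : phi P ⊆ P) : IsMaximalPF P := by
  refine ⟨hP, fun Q hQ hPQ => Set.Subset.antisymm ?_ hPQ⟩
  by_cases hQφ : Q ⊆ phi Q
  · exact fun x hx => hφ (phi_subset_phi hPQ (hQφ hx))
  obtain ⟨b, hbQ, hdmb⟩ := Set.not_subset.mp hQφ
  intro x hx
  set u := (x ⊓ b) ⊓ dm (x ⊓ b)
  have huQ : u ∈ Q :=
    hQ.inf_mem (hQ.inf_mem hx hbQ) (hQ.mem_of_le (not_not.mp hdmb) (dm_le_dm inf_le_right))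
  have hpcu : pc u ∉ Q := fun h => hQ.bot_notMem (inf_pc_self u ▸ hQ.inf_mem huQ h)
  have huP : u ∈ P :=
    ((hP.C_mem_iff _).mp (C_mem_of_phi_subset hI hP hφ _)).resolve_right (hpcu <| hPQ ·)
  exact hP.mem_of_le huP (inf_le_left.trans inf_le_left)

theorem body_eq_empty_iff :
    body L = ∅ ↔ ∀ P : Set L, IsPrimeFilter P → IsMaximalPF P ∨ IsMinimalPF P := by
  simp only [Set.eq_empty_iff_forall_notMem, body, Set.mem_ofPred_eq]
  exact forall_congr' fun P => by tauto

end PMAlgebra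

open PMAlgebra

theorem dm_C_le_C_iff_body_empty_general {L : Type*} [PMAlgebra L]
    (hk : Kleene L) :
    (∀ a : L, dm (C a) ≤ C a) ↔ body L = ∅ := by
  rw [body_eq_empty_iff]
  constructor
  · intro hI P hP
    rcases phi_subset_or_subset_phi hk hP with hφ | hφ
    · exact .inl (isMaximalPF_of_phi_subset hI hP hφ)
    · have hmax := isMaximalPF_of_phi_subset hI hP.phi (by rwa [phi_phi])
      exact .inr (phi_phi P ▸ hmax.phi)
  · intro h a
    refine le_of_forall_isPrimeFilter fun P hP hdm => ?_
    rcases h P hP with hmax | hmin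
    · exact hmax.C_mem a
    · exact absurd hdm (hmin.dm_C_notMem a)

/-- In a subdirectly irreducible pk-algebra, `C(a)' ≤ C(a)` holds for all `a`
iff the body is empty. -/
theorem dm_C_le_C_iff_body_empty {L : Type*} [PMAlgebra L]
    (hk : Kleene L) (hsi : SubdirectlyIrreducible L) :
    (∀ a : L, dm (C a) ≤ C a) ↔ body L = ∅ :=
  dm_C_le_C_iff_body_empty_general hk
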